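/- arXiv:2202.00610 — 8 statements merged into one kernel-verified Lean document; each statement's English description precedes it below -/
import Mathlib

section
/- On finite traces, the formulas □⁺◇⁺φ and ◇⁺□⁺φ are equivalent (both being equivalent to ◇⁺(last ∧ φ)); in contrast, on infinite traces (time domain ℕ) there exists a trace and an atomic formula witnessing that □⁺◇⁺p does not imply ◇⁺□⁺p. -/
inductive Fml (P : Type) : Type
  | atom : P → Fml P
  | tru : Fml P
  | neg : Fml P → Fml P
  | and : Fml P → Fml P → Fml P
  | or : Fml P → Fml P → Fml P
  | untl : Fml P → Fml P → Fml P

namespace Fml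

/-- Satisfaction on a finite trace of length `l` (time points `[0, l]`),
with strict until. -/
def FinSat {P : Type} (σ : ℕ → P → Prop) (l : ℕ) : Fml P → ℕ → Prop
  | atom p, n => σ n p
  | tru, _ => True
  | neg φ, n => ¬ FinSat σ l φ n
  | and φ ψ, n => FinSat σ l φ n ∧ FinSat σ l ψ n
  | or φ ψ, n => FinSat σ l φ n ∨ FinSat σ l ψ n
  | untl φ ψ, n => ∃ m, n < m ∧ m ≤ l ∧ FinSat σ l ψ m ∧ ∀ i, n < i → i < m → FinSat σ l φ i

/-- Satisfaction on an infinite trace, with strict until. -/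
def InfSat {P : Type} (σ : ℕ → P → Prop) : Fml P → ℕ → Prop
  | atom p, n => σ n p
  | tru, _ => True
  | neg φ, n => ¬ InfSat σ φ n
  | and φ ψ, n => InfSat σ φ n ∧ InfSat σ ψ n
  | or φ ψ, n => InfSat σ φ n ∨ InfSat σ ψ n
  | untl φ ψ, n => ∃ m, n < m ∧ InfSat σ ψ m ∧ ∀ i, n < i → i < m → InfSat σ φ i

def fls {P : Type} : Fml P := neg tru
/-- strong (strict) next: ◯φ := ⊥ U φ -/
def nextS {P : Type} (φ : Fml P) : Fml P := untl fls φ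
/-- last := □⊥, i.e. ¬(⊤ U ⊤) -/
def lastF {P : Type} : Fml P := neg (untl tru tru)
/-- weak next: ●φ := ¬◯¬φ -/
def wnext {P : Type} (φ : Fml P) : Fml P := neg (nextS (neg φ))
/-- strict eventually: ◇φ := ⊤ U φ -/
def evS {P : Type} (φ : Fml P) : Fml P := untl tru φ
/-- reflexive eventually: ◇⁺φ := φ ∨ ◇φ -/
def evP {P : Type} (φ : Fml P) : Fml P := Fml.or φ (evS φ)
/-- strict always: □φ := ¬◇¬φ -/
def alwS {P : Type} (φ : Fml P) : Fml P := neg (evS (neg φ))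
/-- reflexive always: □⁺φ := φ ∧ □φ -/
def alwP {P : Type} (φ : Fml P) : Fml P := Fml.and φ (alwS φ)

/-- `Agrees I σ l` : the traces `I` and `σ` agree on the time points `[0, l]`.
Used both for "the infinite trace `I` is an extension of the finite trace `(σ, l)`"
and for "the finite trace `(σ, l)` is a prefix of the infinite trace `I`". -/
def Agrees {P : Type} (I : ℕ → P → Prop) (σ : ℕ → P → Prop) (l : ℕ) : Prop :=
  ∀ i ≤ l, ∀ p, I i p ↔ σ i p

/-- F⇒∃ : satisfaction on a finite trace implies satisfaction on some infinite extension. -/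
def FimpE {P : Type} (χ : Fml P) : Prop :=
  ∀ (σ : ℕ → P → Prop) (l : ℕ), FinSat σ l χ 0 → ∃ I, Agrees I σ l ∧ InfSat I χ 0

/-- F⇒∀ : satisfaction on a finite trace implies satisfaction on every infinite extension. -/
def FimpA {P : Type} (χ : Fml P) : Prop :=
  ∀ (σ : ℕ → P → Prop) (l : ℕ), FinSat σ l χ 0 → ∀ I, Agrees I σ l → InfSat I χ 0

/-- F⇐∃ : satisfaction on some infinite extension implies satisfaction on the finite trace. -/
def FrevE {P : Type} (χ : Fml P) : Prop :=
  ∀ (σ : ℕ → P → Prop) (l : ℕ), (∃ I, Agrees I σ l ∧ InfSat I χ 0) → FinSat σ l χ 0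

/-- F⇐∀ : satisfaction on all infinite extensions implies satisfaction on the finite trace. -/
def FrevA {P : Type} (χ : Fml P) : Prop :=
  ∀ (σ : ℕ → P → Prop) (l : ℕ), (∀ I, Agrees I σ l → InfSat I χ 0) → FinSat σ l χ 0

/-- I⇒∀ : satisfaction on an infinite trace implies satisfaction on every finite prefix. -/
def IimpA {P : Type} (χ : Fml P) : Prop :=
  ∀ I : ℕ → P → Prop, InfSat I χ 0 → ∀ (σ : ℕ → P → Prop) (l : ℕ), Agrees I σ l → FinSat σ l χ 0

/-- I⇒∃ : satisfaction on an infinite trace implies satisfaction on some finite prefix. -/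
def IimpE {P : Type} (χ : Fml P) : Prop :=
  ∀ I : ℕ → P → Prop, InfSat I χ 0 → ∃ (σ : ℕ → P → Prop) (l : ℕ), Agrees I σ l ∧ FinSat σ l χ 0

end Fml

namespace Fml

lemma fin_evP_iff {P : Type} (σ : ℕ → P → Prop) (l : ℕ) (φ : Fml P) (n : ℕ) (h : n ≤ l) :
    FinSat σ l (evP φ) n ↔ ∃ m, n ≤ m ∧ m ≤ l ∧ FinSat σ l φ m := by
  simp only [evP, evS, FinSat]
  constructor
  · rintro (h1 | ⟨m, h1, h2, h3, _⟩)
    · exact ⟨n, le_refl n, h, h1⟩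
    · exact ⟨m, le_of_lt h1, h2, h3⟩
  · rintro ⟨m, h1, h2, h3⟩
    rcases eq_or_lt_of_le h1 with rfl | h1
    · exact Or.inl h3
    · exact Or.inr ⟨m, h1, h2, h3, fun _ _ _ => trivial⟩

lemma fin_alwP_iff {P : Type} (σ : ℕ → P → Prop) (l : ℕ) (φ : Fml P) (n : ℕ) (h : n ≤ l) :
    FinSat σ l (alwP φ) n ↔ ∀ m, n ≤ m → m ≤ l → FinSat σ l φ m := by
  simp only [alwP, alwS, evS, FinSat, not_exists, not_and, not_not]
  constructor
  · rintro ⟨h1, h2⟩ m hm hm'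
    rcases eq_or_lt_of_le hm with rfl | hm
    · exact h1
    · by_contra hc
      exact h2 m hm hm' hc (fun _ _ _ => trivial)
  · intro h1
    exact ⟨h1 n (le_refl n) h, fun m hm hm' hc _ => hc (h1 m (le_of_lt hm) hm')⟩

lemma fin_lastF_iff {P : Type} (σ : ℕ → P → Prop) (l m : ℕ) :
    FinSat σ l (lastF : Fml P) m ↔ l ≤ m := by
  simp only [lastF, FinSat, not_exists, not_and]
  constructor
  · intro h
    by_contra hc
    exact h (m+1) (Nat.lt_succ_self m) (by omega) trivial (fun _ _ _ => trivial)
  · intro h k hk hk'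
    omega

lemma inf_evP_iff {P : Type} (σ : ℕ → P → Prop) (φ : Fml P) (n : ℕ) :
    InfSat σ (evP φ) n ↔ ∃ m, n ≤ m ∧ InfSat σ φ m := by
  simp only [evP, evS, InfSat]
  constructor
  · rintro (h1 | ⟨m, h1, h2, _⟩)
    · exact ⟨n, le_refl n, h1⟩
    · exact ⟨m, le_of_lt h1, h2⟩
  · rintro ⟨m, h1, h2⟩
    rcases eq_or_lt_of_le h1 with rfl | h1
    · exact Or.inl h2
    · exact Or.inr ⟨m, h1, h2, fun _ _ _ => trivial⟩

lemma inf_alwP_iff {P : Type} (σ : ℕ → P → Prop) (φ : Fml P) (n : ℕ) :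
    InfSat σ (alwP φ) n ↔ ∀ m, n ≤ m → InfSat σ φ m := by
  simp only [alwP, alwS, evS, InfSat, not_exists, not_and, not_not]
  constructor
  · rintro ⟨h1, h2⟩ m hm
    rcases eq_or_lt_of_le hm with rfl | hm
    · exact h1
    · by_contra hc
      exact h2 m hm hc (fun _ _ _ => trivial)
  · intro h1
    exact ⟨h1 n (le_refl n), fun m hm hc _ => hc (h1 m (le_of_lt hm))⟩

end Fml


theorem stmt_3 :
    (∀ (P : Type) (φ : Fml P) (σ : ℕ → P → Prop) (l n : ℕ), n ≤ l →
      ((Fml.FinSat σ l (Fml.alwP (Fml.evP φ)) n ↔ Fml.FinSat σ l (Fml.evP (Fml.alwP φ)) n) ∧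
       (Fml.FinSat σ l (Fml.alwP (Fml.evP φ)) n ↔
         Fml.FinSat σ l (Fml.evP (Fml.and Fml.lastF φ)) n))) ∧
    (∃ (P : Type) (σ : ℕ → P → Prop) (p : P),
      Fml.InfSat σ (Fml.alwP (Fml.evP (Fml.atom p))) 0 ∧
      ¬ Fml.InfSat σ (Fml.evP (Fml.alwP (Fml.atom p))) 0) := by
  constructor
  · intro P φ σ l n hn
    have key : ∀ (A : Prop), (A ↔ Fml.FinSat σ l φ l) → ∀ (B : Prop),
        (B ↔ Fml.FinSat σ l φ l) → (A ↔ B) := by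
      intro A hA B hB; rw [hA, hB]
    have h1 : Fml.FinSat σ l (Fml.alwP (Fml.evP φ)) n ↔ Fml.FinSat σ l φ l := by
      rw [Fml.fin_alwP_iff _ _ _ _ hn]
      constructor
      · intro h
        rcases (Fml.fin_evP_iff σ l φ l (le_refl l)).mp (h l hn (le_refl l)) with ⟨m, hm, hm', h3⟩
        have : m = l := le_antisymm hm' hm
        rwa [this] at h3
      · intro h m hm hm'
        exact (Fml.fin_evP_iff σ l φ m hm').mpr ⟨l, hm', le_refl l, h⟩
    have h2 : Fml.FinSat σ l (Fml.evP (Fml.alwP φ)) n ↔ Fml.FinSat σ l φ l := by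
      rw [Fml.fin_evP_iff _ _ _ _ hn]
      constructor
      · rintro ⟨m, hm, hm', h3⟩
        exact (Fml.fin_alwP_iff σ l φ m hm').mp h3 l hm' (le_refl l)
      · intro h
        refine ⟨l, hn, le_refl l, (Fml.fin_alwP_iff σ l φ l (le_refl l)).mpr ?_⟩
        intro m hm hm'
        have : m = l := le_antisymm hm' hm
        rwa [this]
    have h3 : Fml.FinSat σ l (Fml.evP (Fml.and Fml.lastF φ)) n ↔ Fml.FinSat σ l φ l := by
      rw [Fml.fin_evP_iff _ _ _ _ hn]
      constructor
      · rintro ⟨m, hm, hm', hs, h3⟩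
        have : m = l := le_antisymm hm' ((Fml.fin_lastF_iff σ l m).mp hs)
        rwa [this] at h3
      · intro h
        exact ⟨l, hn, le_refl l, (Fml.fin_lastF_iff σ l l).mpr (le_refl l), h⟩
    exact ⟨h1.trans h2.symm, h1.trans h3.symm⟩
  · refine ⟨ℕ, fun n _ => Even n, 0, ?_, ?_⟩
    · rw [Fml.inf_alwP_iff]
      intro m _
      rw [Fml.inf_evP_iff]
      rcases Nat.even_or_odd m with h | h
      · exact ⟨m, le_refl m, h⟩
      · exact ⟨m+1, Nat.le_succ m, by simpa [Fml.InfSat, Nat.even_add_one] using h⟩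
    · rw [Fml.inf_evP_iff]
      rintro ⟨m, _, hm⟩
      rw [Fml.inf_alwP_iff] at hm
      have h1 := hm (2*m+1) (by omega)
      simp only [Fml.InfSat] at h1
      obtain ⟨k, hk⟩ := h1
      omega
end

section
/- Every U⁺-formula (built from literals by ∧, ∨, and reflexive until U⁺) satisfied at time 0 of a finite trace F is satisfied at time 0 of every infinite extension of F (property F⇒∀). -/
/-- U⁺-formulas: literals, ∧, ∨, reflexive until. -/
inductive UpF (P : Type) : Type
  | atom : P → UpF P
  | natom : P → UpF P
  | and : UpF P → UpF P → UpF P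
  | or : UpF P → UpF P → UpF P
  | untlP : UpF P → UpF P → UpF P

namespace UpF

/-- Satisfaction on a finite trace of length `l`, with reflexive until. -/
def FinSat {P : Type} (σ : ℕ → P → Prop) (l : ℕ) : UpF P → ℕ → Prop
  | atom p, n => σ n p
  | natom p, n => ¬ σ n p
  | and φ ψ, n => FinSat σ l φ n ∧ FinSat σ l ψ n
  | or φ ψ, n => FinSat σ l φ n ∨ FinSat σ l ψ n
  | untlP φ ψ, n => ∃ m, n ≤ m ∧ m ≤ l ∧ FinSat σ l ψ m ∧ ∀ i, n ≤ i → i < m → FinSat σ l φ i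

/-- Satisfaction on an infinite trace, with reflexive until. -/
def InfSat {P : Type} (σ : ℕ → P → Prop) : UpF P → ℕ → Prop
  | atom p, n => σ n p
  | natom p, n => ¬ σ n p
  | and φ ψ, n => InfSat σ φ n ∧ InfSat σ ψ n
  | or φ ψ, n => InfSat σ φ n ∨ InfSat σ ψ n
  | untlP φ ψ, n => ∃ m, n ≤ m ∧ InfSat σ ψ m ∧ ∀ i, n ≤ i → i < m → InfSat σ φ i

end UpF


theorem aux_fin_to_inf {P : Type} (σ I : ℕ → P → Prop) (l : ℕ)
    (hag : ∀ i ≤ l, ∀ p, I i p ↔ σ i p) :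
    ∀ (φ : UpF P) (n : ℕ), n ≤ l → UpF.FinSat σ l φ n → UpF.InfSat I φ n := by
  intro φ
  induction φ with
  | atom p => intro n hn h; exact (hag n hn p).2 h
  | natom p => intro n hn h hc; exact h ((hag n hn p).1 hc)
  | and φ ψ ihφ ihψ => intro n hn h; exact ⟨ihφ n hn h.1, ihψ n hn h.2⟩
  | or φ ψ ihφ ihψ =>
      intro n hn h
      cases h with
      | inl h => exact Or.inl (ihφ n hn h)
      | inr h => exact Or.inr (ihψ n hn h)
  | untlP φ ψ ihφ ihψ =>
      intro n hn h
      obtain ⟨m, hnm, hml, hψ, hφ⟩ := h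
      exact ⟨m, hnm, ihψ m hml hψ, fun i hni him =>
        ihφ i (le_trans (le_of_lt him) hml) (hφ i hni him)⟩

theorem stmt_5 {P : Type} (φ : UpF P) (σ : ℕ → P → Prop) (l : ℕ)
    (h : UpF.FinSat σ l φ 0) :
    ∀ I : ℕ → P → Prop, (∀ i ≤ l, ∀ p, I i p ↔ σ i p) → UpF.InfSat I φ 0 := by
  intro I hag
  exact aux_fin_to_inf σ I l hag φ 0 (Nat.zero_le l) h
end

section
/- Every U⁺-formula satisfied at time 0 of the frozen extension F^ω of a finite trace F is satisfied at time 0 of F (property F⇐∀ via the frozen extension): for all finite traces F, F^ω ⊨ φ implies F ⊨ φ, where F^ω is the infinite trace obtained by repeating the last state of F forever. -/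
lemma upf_key {P : Type} (σ : ℕ → P → Prop) (l : ℕ) (φ : UpF P) :
    ∀ n, UpF.InfSat (fun n => σ (min n l)) φ n → UpF.FinSat σ l φ (min n l) := by
  induction φ with
  | atom p => intro n h; exact h
  | natom p => intro n h; exact h
  | and φ ψ ihφ ihψ => intro n h; exact ⟨ihφ n h.1, ihψ n h.2⟩
  | or φ ψ ihφ ihψ =>
    intro n h
    rcases h with h | h
    · exact Or.inl (ihφ n h)
    · exact Or.inr (ihψ n h)
  | untlP φ ψ ihφ ihψ =>
    intro n h
    obtain ⟨m, hnm, hψ, hφ⟩ := h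
    refine ⟨min m l, min_le_min_right l hnm, min_le_right m l, ihψ m hψ, ?_⟩
    intro i hi₁ hi₂
    have hil : i < l := lt_of_lt_of_le hi₂ (min_le_right m l)
    have hni : n ≤ i := by
      by_contra hc
      push_neg at hc
      have : min n l = l := by omega
      omega
    have : UpF.InfSat (fun n => σ (min n l)) φ i :=
      hφ i hni (lt_of_lt_of_le hi₂ (min_le_left m l))
    have := ihφ i this
    rwa [min_eq_left hil.le] at this

theorem stmt_6 {P : Type} (φ : UpF P) (σ : ℕ → P → Prop) (l : ℕ)
    (h : UpF.InfSat (fun n => σ (min n l)) φ 0) :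
    UpF.FinSat σ l φ 0 := by
  have := upf_key σ l φ 0 h
  rwa [Nat.min_eq_left (Nat.zero_le l)] at this
end

section
/- Every R⁺-formula (built from literals by ∧, ∨, and reflexive release R⁺) satisfied at time 0 of a finite trace F is satisfied at time 0 of its frozen extension F^ω; conversely, if some infinite extension of F satisfies an R⁺-formula at time 0 then F satisfies it at time 0. Hence R⁺-formulas satisfy the property F∃: F ⊨ φ iff some infinite extension of F satisfies φ. -/
/-- R⁺-formulas: literals, ∧, ∨, reflexive release. -/
inductive RpF (P : Type) : Type
  | atom : P → RpF P
  | natom : P → RpF P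
  | and : RpF P → RpF P → RpF P
  | or : RpF P → RpF P → RpF P
  | relP : RpF P → RpF P → RpF P

namespace RpF

/-- Satisfaction on a finite trace of length `l`, with reflexive release. -/
def FinSat {P : Type} (σ : ℕ → P → Prop) (l : ℕ) : RpF P → ℕ → Prop
  | atom p, n => σ n p
  | natom p, n => ¬ σ n p
  | and φ ψ, n => FinSat σ l φ n ∧ FinSat σ l ψ n
  | or φ ψ, n => FinSat σ l φ n ∨ FinSat σ l ψ n
  | relP φ ψ, n => ∀ m, n ≤ m → m ≤ l →
      (FinSat σ l ψ m ∨ ∃ i, n ≤ i ∧ i < m ∧ FinSat σ l φ i)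

/-- Satisfaction on an infinite trace, with reflexive release. -/
def InfSat {P : Type} (σ : ℕ → P → Prop) : RpF P → ℕ → Prop
  | atom p, n => σ n p
  | natom p, n => ¬ σ n p
  | and φ ψ, n => InfSat σ φ n ∧ InfSat σ ψ n
  | or φ ψ, n => InfSat σ φ n ∨ InfSat σ ψ n
  | relP φ ψ, n => ∀ m, n ≤ m →
      (InfSat σ ψ m ∨ ∃ i, n ≤ i ∧ i < m ∧ InfSat σ φ i)


lemma fin_to_frozen {P : Type} (σ : ℕ → P → Prop) (l : ℕ) (φ : RpF P) :
    ∀ n, FinSat σ l φ (min n l) → InfSat (fun n => σ (min n l)) φ n := by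
  induction φ with
  | atom p => intro n h; exact h
  | natom p => intro n h; exact h
  | and φ ψ ihφ ihψ => intro n h; exact ⟨ihφ n h.1, ihψ n h.2⟩
  | or φ ψ ihφ ihψ =>
      intro n h
      rcases h with h | h
      · exact Or.inl (ihφ n h)
      · exact Or.inr (ihψ n h)
  | relP φ ψ ihφ ihψ =>
      intro n h m hnm
      rcases h (min m l) (min_le_min_right l hnm) (min_le_right m l) with h | ⟨i, hni, him, hi⟩
      · exact Or.inl (ihψ m h)
      · have hil : i < l := lt_of_lt_of_le him (min_le_right m l)
        have hnl : n ≤ l := by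
          by_contra hc
          push_neg at hc
          have : l ≤ i := by simpa [min_eq_right hc.le] using hni
          omega
        refine Or.inr ⟨i, ?_, lt_of_lt_of_le him (min_le_left m l), ihφ i ?_⟩
        · simpa [min_eq_left hnl] using hni
        · simpa [min_eq_left hil.le] using hi

lemma inf_to_fin {P : Type} (σ I : ℕ → P → Prop) (l : ℕ)
    (hI : ∀ i ≤ l, ∀ p, I i p ↔ σ i p) (φ : RpF P) :
    ∀ n ≤ l, InfSat I φ n → FinSat σ l φ n := by
  induction φ with
  | atom p => intro n hn h; exact (hI n hn p).mp h
  | natom p => intro n hn h hc; exact h ((hI n hn p).mpr hc)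
  | and φ ψ ihφ ihψ => intro n hn h; exact ⟨ihφ n hn h.1, ihψ n hn h.2⟩
  | or φ ψ ihφ ihψ =>
      intro n hn h
      rcases h with h | h
      · exact Or.inl (ihφ n hn h)
      · exact Or.inr (ihψ n hn h)
  | relP φ ψ ihφ ihψ =>
      intro n _ h m hnm hml
      rcases h m hnm with h | ⟨i, hni, him, hi⟩
      · exact Or.inl (ihψ m hml h)
      · exact Or.inr ⟨i, hni, him, ihφ i (by omega) hi⟩



end RpF

theorem stmt_7 {P : Type} (φ : RpF P) (σ : ℕ → P → Prop) (l : ℕ) :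
    (RpF.FinSat σ l φ 0 → RpF.InfSat (fun n => σ (min n l)) φ 0) ∧
    ((∃ I : ℕ → P → Prop, (∀ i ≤ l, ∀ p, I i p ↔ σ i p) ∧ RpF.InfSat I φ 0) →
      RpF.FinSat σ l φ 0) ∧
    (RpF.FinSat σ l φ 0 ↔
      ∃ I : ℕ → P → Prop, (∀ i ≤ l, ∀ p, I i p ↔ σ i p) ∧ RpF.InfSat I φ 0) := by
  constructor
  · intro h
    exact RpF.fin_to_frozen σ l φ 0 (by simpa using h)
  constructor
  · rintro ⟨I, hI, h⟩
    exact RpF.inf_to_fin σ I l hI φ 0 (Nat.zero_le l) h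
  · constructor
    · intro h
      refine ⟨fun n => σ (min n l), fun i hi p => by simp [min_eq_left hi], ?_⟩
      exact RpF.fin_to_frozen σ l φ 0 (by simpa using h)
    · rintro ⟨I, hI, h⟩
      exact RpF.inf_to_fin σ I l hI φ 0 (Nat.zero_le l) h
end

section
/- Every U-formula φ satisfies the infinite trace property I∃: for every infinite trace I, I satisfies φ at time 0 iff some finite prefix of I satisfies φ at time 0. -/
/-- U-formulas: literals, ∧, ∨, strict until. -/
inductive UF (P : Type) : Type
  | atom : P → UF P
  | natom : P → UF P
  | and : UF P → UF P → UF P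
  | or : UF P → UF P → UF P
  | untl : UF P → UF P → UF P

namespace UF

/-- Satisfaction on a finite trace of length `l`, with strict until. -/
def FinSat {P : Type} (σ : ℕ → P → Prop) (l : ℕ) : UF P → ℕ → Prop
  | atom p, n => σ n p
  | natom p, n => ¬ σ n p
  | and φ ψ, n => FinSat σ l φ n ∧ FinSat σ l ψ n
  | or φ ψ, n => FinSat σ l φ n ∨ FinSat σ l ψ n
  | untl φ ψ, n => ∃ m, n < m ∧ m ≤ l ∧ FinSat σ l ψ m ∧ ∀ i, n < i → i < m → FinSat σ l φ i

/-- Satisfaction on an infinite trace, with strict until. -/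
def InfSat {P : Type} (σ : ℕ → P → Prop) : UF P → ℕ → Prop
  | atom p, n => σ n p
  | natom p, n => ¬ σ n p
  | and φ ψ, n => InfSat σ φ n ∧ InfSat σ ψ n
  | or φ ψ, n => InfSat σ φ n ∨ InfSat σ ψ n
  | untl φ ψ, n => ∃ m, n < m ∧ InfSat σ ψ m ∧ ∀ i, n < i → i < m → InfSat σ φ i

end UF

lemma finsat_mono {P : Type} (σ : ℕ → P → Prop) (φ : UF P) :
    ∀ n l l', l ≤ l' → UF.FinSat σ l φ n → UF.FinSat σ l' φ n := by
  induction φ with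
  | atom p => intro n l l' _ h; exact h
  | natom p => intro n l l' _ h; exact h
  | and a b iha ihb =>
      intro n l l' hle h
      exact ⟨iha n l l' hle h.1, ihb n l l' hle h.2⟩
  | or a b iha ihb =>
      intro n l l' hle h
      exact h.imp (iha n l l' hle) (ihb n l l' hle)
  | untl a b iha ihb =>
      rintro n l l' hle ⟨m, hnm, hml, hb, ha⟩
      exact ⟨m, hnm, hml.trans hle, ihb m l l' hle hb,
        fun i h1 h2 => iha i l l' hle (ha i h1 h2)⟩

lemma fin_to_inf {P : Type} (σ : ℕ → P → Prop) (φ : UF P) :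
    ∀ n l, UF.FinSat σ l φ n → UF.InfSat σ φ n := by
  induction φ with
  | atom p => intro n l h; exact h
  | natom p => intro n l h; exact h
  | and a b iha ihb => intro n l h; exact ⟨iha n l h.1, ihb n l h.2⟩
  | or a b iha ihb => intro n l h; exact h.imp (iha n l) (ihb n l)
  | untl a b iha ihb =>
      rintro n l ⟨m, hnm, _, hb, ha⟩
      exact ⟨m, hnm, ihb m l hb, fun i h1 h2 => iha i l (ha i h1 h2)⟩

lemma inf_to_fin {P : Type} (σ : ℕ → P → Prop) (φ : UF P) :
    ∀ n, UF.InfSat σ φ n → ∃ l, UF.FinSat σ l φ n := by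
  induction φ with
  | atom p => intro n h; exact ⟨0, h⟩
  | natom p => intro n h; exact ⟨0, h⟩
  | and a b iha ihb =>
      rintro n ⟨ha, hb⟩
      obtain ⟨l1, h1⟩ := iha n ha
      obtain ⟨l2, h2⟩ := ihb n hb
      exact ⟨max l1 l2, finsat_mono σ a n l1 _ (le_max_left _ _) h1,
        finsat_mono σ b n l2 _ (le_max_right _ _) h2⟩
  | or a b iha ihb =>
      rintro n (h | h)
      · obtain ⟨l, h⟩ := iha n h; exact ⟨l, Or.inl h⟩
      · obtain ⟨l, h⟩ := ihb n h; exact ⟨l, Or.inr h⟩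
  | untl a b iha ihb =>
      rintro n ⟨m, hnm, hb, ha⟩
      obtain ⟨l0, h0⟩ := ihb m hb
      -- choose a length for each i < m satisfying a
      have hch : ∀ i : Fin m, ∃ l, UF.FinSat σ l a i ∨ ¬ (n < (i:ℕ) ∧ (i:ℕ) < m) := by
        intro i
        by_cases hc : n < (i:ℕ) ∧ (i:ℕ) < m
        · obtain ⟨l, hl⟩ := iha i (ha i hc.1 hc.2)
          exact ⟨l, Or.inl hl⟩
        · exact ⟨0, Or.inr hc⟩
      choose f hf using hch
      set L := max (max l0 m) (Finset.univ.sup f) with hL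
      refine ⟨L, m, hnm, le_trans (le_max_right l0 m) (le_max_left _ _),
        finsat_mono σ b m l0 L (le_trans (le_max_left l0 m) (le_max_left _ _)) h0, ?_⟩
      intro i h1 h2
      have := hf ⟨i, h2⟩
      rcases this with h | h
      · exact finsat_mono σ a i _ L
          (le_trans (Finset.le_sup (Finset.mem_univ ⟨i, h2⟩)) (le_max_right _ _)) h
      · exact absurd ⟨h1, h2⟩ h

theorem stmt_9 {P : Type} (φ : UF P) (I : ℕ → P → Prop) :
    UF.InfSat I φ 0 ↔ ∃ l : ℕ, UF.FinSat I l φ 0 := by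
  constructor
  · exact inf_to_fin I φ 0
  · rintro ⟨l, h⟩; exact fin_to_inf I φ 0 l h
end

section
/- For R-formulas (built from literals by ∧, ∨, and strict release R), falsity is monotone under prefixes: if F' is a prefix of a finite trace F and F' does not satisfy an R-formula φ at time 0, then F does not satisfy φ at time 0. Consequently, every R-formula satisfies the infinite trace property I∀: an infinite trace I satisfies φ at time 0 iff every finite prefix of I satisfies φ at time 0. -/
/-- R-formulas: literals, ∧, ∨, strict release. -/
inductive RF (P : Type) : Type
  | atom : P → RF P
  | natom : P → RF P
  | and : RF P → RF P → RF P
  | or : RF P → RF P → RF P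
  | rel : RF P → RF P → RF P

namespace RF

/-- Satisfaction on a finite trace of length `l`, with strict release. -/
def FinSat {P : Type} (σ : ℕ → P → Prop) (l : ℕ) : RF P → ℕ → Prop
  | atom p, n => σ n p
  | natom p, n => ¬ σ n p
  | and φ ψ, n => FinSat σ l φ n ∧ FinSat σ l ψ n
  | or φ ψ, n => FinSat σ l φ n ∨ FinSat σ l ψ n
  | rel φ ψ, n => ∀ m, n < m → m ≤ l →
      (FinSat σ l ψ m ∨ ∃ i, n < i ∧ i < m ∧ FinSat σ l φ i)

/-- Satisfaction on an infinite trace, with strict release. -/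
def InfSat {P : Type} (σ : ℕ → P → Prop) : RF P → ℕ → Prop
  | atom p, n => σ n p
  | natom p, n => ¬ σ n p
  | and φ ψ, n => InfSat σ φ n ∧ InfSat σ ψ n
  | or φ ψ, n => InfSat σ φ n ∨ InfSat σ ψ n
  | rel φ ψ, n => ∀ m, n < m →
      (InfSat σ ψ m ∨ ∃ i, n < i ∧ i < m ∧ InfSat σ φ i)

end RF

lemma fin_mono {P : Type} (σ σ' : ℕ → P → Prop) :
    ∀ (φ : RF P) (l l' n : ℕ), n ≤ l' → l' ≤ l →
      (∀ i ≤ l', ∀ p, σ' i p ↔ σ i p) →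
      RF.FinSat σ l φ n → RF.FinSat σ' l' φ n := by
  intro φ
  induction φ with
  | atom p =>
    intro l l' n hn hl h hs
    exact (h n hn p).mpr hs
  | natom p =>
    intro l l' n hn hl h hs hc
    exact hs ((h n hn p).mp hc)
  | and φ ψ ihφ ihψ =>
    intro l l' n hn hl h hs
    exact ⟨ihφ l l' n hn hl h hs.1, ihψ l l' n hn hl h hs.2⟩
  | or φ ψ ihφ ihψ =>
    intro l l' n hn hl h hs
    rcases hs with hs | hs
    · exact Or.inl (ihφ l l' n hn hl h hs)
    · exact Or.inr (ihψ l l' n hn hl h hs)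
  | rel φ ψ ihφ ihψ =>
    intro l l' n hn hl h hs m hm hml'
    rcases hs m hm (hml'.trans hl) with hψ | ⟨i, hi1, hi2, hφ⟩
    · exact Or.inl (ihψ l l' m hml' hl h hψ)
    · exact Or.inr ⟨i, hi1, hi2, ihφ l l' i ((hi2.le).trans hml') hl h hφ⟩

lemma fin_anti {P : Type} (σ : ℕ → P → Prop) (φ : RF P) (l l' n : ℕ)
    (hn : n ≤ l') (hl : l' ≤ l) (hs : RF.FinSat σ l φ n) : RF.FinSat σ l' φ n :=
  fin_mono σ σ φ l l' n hn hl (fun _ _ _ => Iff.rfl) hs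

lemma inf_to_fin_s10 {P : Type} (I : ℕ → P → Prop) :
    ∀ (φ : RF P) (n l : ℕ), RF.InfSat I φ n → RF.FinSat I l φ n := by
  intro φ
  induction φ with
  | atom p => exact fun n l hs => hs
  | natom p => exact fun n l hs => hs
  | and φ ψ ihφ ihψ => exact fun n l hs => ⟨ihφ n l hs.1, ihψ n l hs.2⟩
  | or φ ψ ihφ ihψ =>
    intro n l hs
    rcases hs with hs | hs
    · exact Or.inl (ihφ n l hs)
    · exact Or.inr (ihψ n l hs)
  | rel φ ψ ihφ ihψ =>
    intro n l hs m hm _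
    rcases hs m hm with hψ | ⟨i, hi1, hi2, hφ⟩
    · exact Or.inl (ihψ m l hψ)
    · exact Or.inr ⟨i, hi1, hi2, ihφ i l hφ⟩

lemma fin_to_inf_s10 {P : Type} (I : ℕ → P → Prop) :
    ∀ (φ : RF P) (n : ℕ), (∀ l, n ≤ l → RF.FinSat I l φ n) → RF.InfSat I φ n := by
  intro φ
  induction φ with
  | atom p => exact fun n h => h n le_rfl
  | natom p => exact fun n h => h n le_rfl
  | and φ ψ ihφ ihψ =>
    intro n h
    exact ⟨ihφ n (fun l hl => (h l hl).1), ihψ n (fun l hl => (h l hl).2)⟩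
  | or φ ψ ihφ ihψ =>
    intro n h
    by_cases hφ : ∀ l, n ≤ l → RF.FinSat I l φ n
    · exact Or.inl (ihφ n hφ)
    · push_neg at hφ
      obtain ⟨l0, hl0, hnl0⟩ := hφ
      refine Or.inr (ihψ n ?_)
      intro l hl
      have key : RF.FinSat I (max l l0) ψ n := by
        rcases h (max l l0) (hl.trans (le_max_left _ _)) with hc | hc
        · exact absurd (fin_anti I φ (max l l0) l0 n hl0 (le_max_right _ _) hc) hnl0
        · exact hc
      exact fin_anti I ψ (max l l0) l n hl (le_max_left _ _) key
  | rel φ ψ ihφ ihψ =>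
    intro n h m hm
    by_cases hex : ∃ i, n < i ∧ i < m ∧ ∀ l, i ≤ l → RF.FinSat I l φ i
    · obtain ⟨i, hi1, hi2, hi3⟩ := hex
      exact Or.inr ⟨i, hi1, hi2, ihφ i hi3⟩
    · push_neg at hex
      -- hex : ∀ i, n < i → i < m → ∃ l, i ≤ l ∧ ¬ FinSat I l φ i
      have hL : ∀ k, k ≤ m → ∃ L, ∀ i, n < i → i < k → ∀ l, L ≤ l → ¬ RF.FinSat I l φ i := by
        intro k
        induction k with
        | zero => exact fun _ => ⟨0, fun i _ hi => absurd hi (Nat.not_lt_zero i)⟩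
        | succ k ih =>
          intro hk
          obtain ⟨L, hLp⟩ := ih (Nat.le_of_succ_le hk)
          by_cases hnk : n < k
          · obtain ⟨l0, hl0, hnl0⟩ := hex k hnk hk
            refine ⟨max L l0, fun i hi hik l hl hc => ?_⟩
            rcases Nat.lt_succ_iff_lt_or_eq.mp hik with h1 | rfl
            · exact hLp i hi h1 l ((le_max_left _ _).trans hl) hc
            · exact hnl0 (fin_anti I φ l l0 i hl0 ((le_max_right _ _).trans hl) hc)
          · refine ⟨L, fun i hi hik l hl hc => ?_⟩
            rcases Nat.lt_succ_iff_lt_or_eq.mp hik with h1 | rfl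
            · exact hLp i hi h1 l hl hc
            · exact hnk hi
      obtain ⟨L, hLp⟩ := hL m le_rfl
      refine Or.inl (ihψ m ?_)
      intro l hl
      have h1 : m ≤ max l L := hl.trans (le_max_left _ _)
      rcases h (max l L) (hm.le.trans h1) m hm h1 with hψ | ⟨i, hi1, hi2, hφ⟩
      · exact fin_anti I ψ (max l L) l m hl (le_max_left _ _) hψ
      · exact absurd hφ (hLp i hi1 hi2 (max l L) (le_max_right _ _))

theorem stmt_10 {P : Type} :
    (∀ (φ : RF P) (σ σ' : ℕ → P → Prop) (l l' : ℕ), l' ≤ l →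
      (∀ i ≤ l', ∀ p, σ' i p ↔ σ i p) →
      ¬ RF.FinSat σ' l' φ 0 → ¬ RF.FinSat σ l φ 0) ∧
    (∀ (φ : RF P) (I : ℕ → P → Prop), RF.InfSat I φ 0 ↔ ∀ l : ℕ, RF.FinSat I l φ 0) := by
  constructor
  · intro φ σ σ' l l' hl h hns hs
    exact hns (fin_mono σ σ' φ l l' 0 (Nat.zero_le _) hl h hs)
  · intro φ I
    constructor
    · exact fun hs l => inf_to_fin_s10 I φ 0 l hs
    · exact fun h => fin_to_inf_s10 I φ 0 (fun l _ => h l)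
end

section
/- Every U⁺R⁺-formula (built from literals by ∧, ∨, reflexive until U⁺, and reflexive release R⁺) satisfies the frozen trace property: for every finite trace F, F satisfies φ at time 0 iff the frozen extension F^ω satisfies φ at time 0. Consequently, every U⁺R⁺-formula satisfiable on finite traces is satisfiable on infinite traces. -/
/-- U⁺R⁺-formulas: literals, ∧, ∨, reflexive until, reflexive release. -/
inductive URF (P : Type) : Type
  | atom : P → URF P
  | natom : P → URF P
  | and : URF P → URF P → URF P
  | or : URF P → URF P → URF P
  | untlP : URF P → URF P → URF P
  | relP : URF P → URF P → URF P

namespace URF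

/-- Satisfaction on a finite trace of length `l`. -/
def FinSat {P : Type} (σ : ℕ → P → Prop) (l : ℕ) : URF P → ℕ → Prop
  | atom p, n => σ n p
  | natom p, n => ¬ σ n p
  | and φ ψ, n => FinSat σ l φ n ∧ FinSat σ l ψ n
  | or φ ψ, n => FinSat σ l φ n ∨ FinSat σ l ψ n
  | untlP φ ψ, n => ∃ m, n ≤ m ∧ m ≤ l ∧ FinSat σ l ψ m ∧ ∀ i, n ≤ i → i < m → FinSat σ l φ i
  | relP φ ψ, n => ∀ m, n ≤ m → m ≤ l →
      (FinSat σ l ψ m ∨ ∃ i, n ≤ i ∧ i < m ∧ FinSat σ l φ i)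

/-- Satisfaction on an infinite trace. -/
def InfSat {P : Type} (σ : ℕ → P → Prop) : URF P → ℕ → Prop
  | atom p, n => σ n p
  | natom p, n => ¬ σ n p
  | and φ ψ, n => InfSat σ φ n ∧ InfSat σ ψ n
  | or φ ψ, n => InfSat σ φ n ∨ InfSat σ ψ n
  | untlP φ ψ, n => ∃ m, n ≤ m ∧ InfSat σ ψ m ∧ ∀ i, n ≤ i → i < m → InfSat σ φ i
  | relP φ ψ, n => ∀ m, n ≤ m →
      (InfSat σ ψ m ∨ ∃ i, n ≤ i ∧ i < m ∧ InfSat σ φ i)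

end URF


lemma urf_shift {P : Type} (σ' : ℕ → P → Prop) (l : ℕ)
    (hc : ∀ k p, l ≤ k → (σ' k p ↔ σ' l p)) :
    ∀ (φ : URF P) (m : ℕ), l ≤ m → (URF.InfSat σ' φ m ↔ URF.InfSat σ' φ l) := by
  intro φ
  induction φ with
  | atom p => intro m hm; exact hc m p hm
  | natom p => intro m hm; simp [URF.InfSat, hc m p hm]
  | and φ ψ ih1 ih2 => intro m hm; simp [URF.InfSat, ih1 m hm, ih2 m hm]
  | or φ ψ ih1 ih2 => intro m hm; simp [URF.InfSat, ih1 m hm, ih2 m hm]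
  | untlP φ ψ ih1 ih2 =>
    intro m hm
    constructor
    · rintro ⟨m', hmm', hψ, _⟩
      exact ⟨l, le_refl l, (ih2 m' (hm.trans hmm')).mp hψ, fun i h1 h2 => absurd h1 (not_le.mpr h2)⟩
    · rintro ⟨m', hlm', hψ, _⟩
      exact ⟨m, le_refl m, (ih2 m hm).mpr ((ih2 m' hlm').mp hψ),
        fun i h1 h2 => absurd h1 (not_le.mpr h2)⟩
  | relP φ ψ ih1 ih2 =>
    intro m hm
    constructor
    · intro h m' hm'
      have hψm : URF.InfSat σ' ψ m := by
        rcases h m (le_refl m) with hh | ⟨i, h1, h2, _⟩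
        · exact hh
        · omega
      exact Or.inl ((ih2 m' hm').mpr ((ih2 m hm).mp hψm))
    · intro h m' hm'
      have hψl : URF.InfSat σ' ψ l := by
        rcases h l (le_refl l) with hh | ⟨i, h1, h2, _⟩
        · exact hh
        · omega
      exact Or.inl ((ih2 m' (hm.trans hm')).mpr hψl)

lemma urf_main {P : Type} (σ : ℕ → P → Prop) (l : ℕ) :
    ∀ (φ : URF P) (n : ℕ), n ≤ l →
      (URF.FinSat σ l φ n ↔ URF.InfSat (fun k => σ (min k l)) φ n) := by
  have hc : ∀ k p, l ≤ k → ((fun k => σ (min k l)) k p ↔ (fun k => σ (min k l)) l p) := by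
    intro k p hk
    simp [Nat.min_eq_right hk]
  intro φ
  induction φ with
  | atom p => intro n hn; simp [URF.FinSat, URF.InfSat, Nat.min_eq_left hn]
  | natom p => intro n hn; simp [URF.FinSat, URF.InfSat, Nat.min_eq_left hn]
  | and φ ψ ih1 ih2 => intro n hn; simp [URF.FinSat, URF.InfSat, ih1 n hn, ih2 n hn]
  | or φ ψ ih1 ih2 => intro n hn; simp [URF.FinSat, URF.InfSat, ih1 n hn, ih2 n hn]
  | untlP φ ψ ih1 ih2 =>
    intro n hn
    constructor
    · rintro ⟨m, hnm, hml, hψ, hφ⟩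
      exact ⟨m, hnm, (ih2 m hml).mp hψ, fun i h1 h2 => (ih1 i (le_of_lt (lt_of_lt_of_le h2 hml))).mp (hφ i h1 h2)⟩
    · rintro ⟨m, hnm, hψ, hφ⟩
      by_cases hml : m ≤ l
      · exact ⟨m, hnm, hml, (ih2 m hml).mpr hψ,
          fun i h1 h2 => (ih1 i (le_of_lt (lt_of_lt_of_le h2 hml))).mpr (hφ i h1 h2)⟩
      · push_neg at hml
        refine ⟨l, hn, le_refl l, ?_, ?_⟩
        · exact (ih2 l (le_refl l)).mpr
            ((urf_shift _ l hc ψ m (le_of_lt hml)).mp hψ)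
        · intro i h1 h2
          exact (ih1 i (le_of_lt h2)).mpr (hφ i h1 (h2.trans hml))
  | relP φ ψ ih1 ih2 =>
    intro n hn
    constructor
    · intro h m hnm
      by_cases hml : m ≤ l
      · rcases h m hnm hml with hψ | ⟨i, h1, h2, hφ⟩
        · exact Or.inl ((ih2 m hml).mp hψ)
        · exact Or.inr ⟨i, h1, h2, (ih1 i (le_of_lt (lt_of_lt_of_le h2 hml))).mp hφ⟩
      · push_neg at hml
        rcases h l hn (le_refl l) with hψ | ⟨i, h1, h2, hφ⟩
        · exact Or.inl ((urf_shift _ l hc ψ m (le_of_lt hml)).mpr ((ih2 l (le_refl l)).mp hψ))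
        · exact Or.inr ⟨i, h1, h2.trans hml, (ih1 i (le_of_lt h2)).mp hφ⟩
    · intro h m hnm hml
      rcases h m hnm with hψ | ⟨i, h1, h2, hφ⟩
      · exact Or.inl ((ih2 m hml).mpr hψ)
      · exact Or.inr ⟨i, h1, h2, (ih1 i (le_of_lt (lt_of_lt_of_le h2 hml))).mpr hφ⟩

theorem stmt_11 {P : Type} :
    (∀ (φ : URF P) (σ : ℕ → P → Prop) (l : ℕ),
      URF.FinSat σ l φ 0 ↔ URF.InfSat (fun n => σ (min n l)) φ 0) ∧
    (∀ φ : URF P, (∃ (σ : ℕ → P → Prop) (l : ℕ), URF.FinSat σ l φ 0) →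
      ∃ I : ℕ → P → Prop, URF.InfSat I φ 0) := by
  constructor
  · intro φ σ l
    exact urf_main σ l φ 0 (Nat.zero_le l)
  · rintro φ ⟨σ, l, h⟩
    exact ⟨fun n => σ (min n l), (urf_main σ l φ 0 (Nat.zero_le l)).mp h⟩
end

section
/- Let φ be an LTL formula satisfying both F⇒∃ and I⇒∀, and let χ be an LTL formula expressing a safety property. Then φ entails χ on infinite traces iff no finite trace satisfying φ is a bad prefix for χ (i.e., Trace_f(φ) ∩ BadPre(χ) = ∅). -/
/-- `χ` expresses a safety property: every infinite trace falsifying `χ`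
has a finite prefix all of whose infinite extensions falsify `χ`. -/
def Safety {P : Type} (χ : Fml P) : Prop :=
  ∀ I : ℕ → P → Prop, ¬ Fml.InfSat I χ 0 →
    ∃ l : ℕ, ∀ I' : ℕ → P → Prop, Fml.Agrees I' I l → ¬ Fml.InfSat I' χ 0

/-- The finite trace `(σ, l)` is a bad prefix for `χ`:
all its infinite extensions falsify `χ`. -/
def BadPre {P : Type} (χ : Fml P) (σ : ℕ → P → Prop) (l : ℕ) : Prop :=
  ∀ I : ℕ → P → Prop, Fml.Agrees I σ l → ¬ Fml.InfSat I χ 0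

theorem stmt_17 {P : Type} (φ χ : Fml P)
    (hφ1 : Fml.FimpE φ) (hφ2 : Fml.IimpA φ) (hχ : Safety χ) :
    (∀ I : ℕ → P → Prop, Fml.InfSat I φ 0 → Fml.InfSat I χ 0) ↔
    (∀ (σ : ℕ → P → Prop) (l : ℕ), Fml.FinSat σ l φ 0 → ¬ BadPre χ σ l) := by
  constructor
  · intro h σ l hfin hbad
    obtain ⟨I, hag, hIφ⟩ := hφ1 σ l hfin
    exact hbad I hag (h I hIφ)
  · intro h I hIφ
    by_contra hIχ
    obtain ⟨l, hl⟩ := hχ I hIχ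
    have hagree : Fml.Agrees I I l := fun i _ p => Iff.rfl
    exact h I l (hφ2 I hIφ I l hagree) (fun I' hag => hl I' hag)
end
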